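/- arXiv:1511.06257 — 6 statements merged into one kernel-verified Lean document; each statement's English description precedes it below -/
import Mathlib

section
/- Let s > 0 and d₁, d₂ ≥ 1, and let a : ℕ^{d₂} × ℕ^{d₁} → ℂ satisfy: there exist r > 0 and C > 0 with |a(α,β)| ≤ C e^{−r(|α|^{1/(2s)} + |β|^{1/(2s)})} for all α, β. Then for every f : ℕ^{d₁} → ℂ such that for every ρ > 0 there is C_ρ > 0 with |f(β)| ≤ C_ρ e^{ρ|β|^{1/(2s)}} for all β, the series (Af)(α) = ∑_β a(α,β) f(β) converges absolutely for every α ∈ ℕ^{d₂}, and there exist r' > 0 and C' > 0 such that |(Af)(α)| ≤ C' e^{−r'|α|^{1/(2s)}} for all α. -/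
/-!
Take `ρ = r/2` in the growth bound for `f`: then `|a(α,β) f(β)| ≤ C C_ρ e^{-r|α|^t} e^{-(r/2)|β|^t}`
with `t = 1/(2s)`. The weight `β ↦ e^{-c|β|^t}` is summable on `ℕ^d`, because `|β|^t ≥ β_i^t` for
every `i` makes it at most the product `∏ᵢ e^{-(c/d) β_i^t}` of summable one-variable weights.
Summing over `β` gives absolute convergence and the decay `e^{-r|α|^t}` with the same `r`.
-/

/-- `|α| = α₁ + ⋯ + α_d` as a real number. -/
noncomputable def msz {d : ℕ} (α : Fin d → ℕ) : ℝ := (∑ i, α i : ℕ)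

open Real Filter Asymptotics

lemma coord_le_msz {d : ℕ} (β : Fin d → ℕ) (i : Fin d) : (β i : ℝ) ≤ msz β := by
  unfold msz
  exact_mod_cast Finset.single_le_sum (fun j _ => Nat.zero_le (β j)) (Finset.mem_univ i)

lemma summable_exp_neg_mul_rpow_nat {c t : ℝ} (hc : 0 < c) (ht : 0 < t) :
    Summable fun k : ℕ => exp (-(c * (k : ℝ) ^ t)) := by
  have hlim : Tendsto (fun k : ℕ => (k : ℝ) ^ t) atTop atTop :=
    (tendsto_rpow_atTop ht).comp tendsto_natCast_atTop_atTop
  -- `e^{-cx} = o(x^{-2/t})`, evaluated at `x = k^t`, compares the terms with `k^{-2}`.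
  have ho := (isLittleO_exp_neg_mul_rpow_atTop hc (-(2 / t))).comp_tendsto hlim
  refine summable_of_isBigO_nat' (Real.summable_nat_rpow.mpr (by norm_num : (-2 : ℝ) < -1))
    (ho.isBigO.congr' (Eventually.of_forall fun k => ?_) (Eventually.of_forall fun k => ?_))
  · simp [neg_mul]
  · simp only [Function.comp_apply]
    rw [← rpow_mul (Nat.cast_nonneg k)]
    congr 1
    field_simp

lemma summable_pi_fin_prod {α : Type*} {g : α → ℝ} (hg0 : ∀ k, 0 ≤ g k) (hg : Summable g)
    (d : ℕ) : Summable fun β : Fin d → α => ∏ i, g (β i) := by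
  induction d with
  | zero => exact Summable.of_finite
  | succ n ih =>
    have hprod := hg.mul_of_nonneg ih hg0 fun β => Finset.prod_nonneg fun i _ => hg0 _
    refine ((Fin.consEquiv fun _ : Fin (n + 1) => α).symm.summable_iff
      (f := fun p : α × (Fin n → α) => g p.1 * ∏ i, g (p.2 i))).mpr hprod |>.congr fun β => ?_
    simp [Fin.consEquiv, Fin.prod_univ_succ, Fin.tail]

lemma exp_neg_mul_msz_rpow_le_prod {d : ℕ} (hd : 0 < d) {c t : ℝ} (hc : 0 ≤ c) (ht : 0 ≤ t)
    (β : Fin d → ℕ) :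
    exp (-(c * msz β ^ t)) ≤ ∏ i, exp (-(c / d * (β i : ℝ) ^ t)) := by
  have hsum : ∑ i, (β i : ℝ) ^ t ≤ d * msz β ^ t := by
    calc ∑ i, (β i : ℝ) ^ t ≤ ∑ _i : Fin d, msz β ^ t :=
          Finset.sum_le_sum fun i _ => rpow_le_rpow (Nat.cast_nonneg _) (coord_le_msz β i) ht
      _ = d * msz β ^ t := by simp
  rw [← exp_sum, exp_le_exp, Finset.sum_neg_distrib, ← Finset.mul_sum, neg_le_neg_iff]
  calc c / d * ∑ i, (β i : ℝ) ^ t ≤ c / d * (d * msz β ^ t) := by gcongr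
    _ = c * msz β ^ t := by field_simp

lemma summable_exp_neg_mul_msz_rpow {d : ℕ} {c t : ℝ} (hc : 0 < c) (ht : 0 < t) :
    Summable fun β : Fin d → ℕ => exp (-(c * msz β ^ t)) := by
  rcases Nat.eq_zero_or_pos d with rfl | hd
  · exact Summable.of_finite
  refine (summable_pi_fin_prod (fun k => (exp_pos _).le)
    (summable_exp_neg_mul_rpow_nat (by positivity) ht) d).of_nonneg_of_le
    (fun β => (exp_pos _).le) (exp_neg_mul_msz_rpow_le_prod hd hc.le ht.le)

theorem stmt2_general
    (s : ℝ) (hs : 0 < s) (d₁ d₂ : ℕ)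
    (a : (Fin d₂ → ℕ) → (Fin d₁ → ℕ) → ℂ)
    (ha : ∃ r > (0:ℝ), ∃ C > (0:ℝ), ∀ (α : Fin d₂ → ℕ) (β : Fin d₁ → ℕ),
      ‖a α β‖ ≤ C * Real.exp (-(r * (msz α ^ (1/(2*s)) + msz β ^ (1/(2*s))))))
    (f : (Fin d₁ → ℕ) → ℂ)
    (hf : ∀ ρ > (0:ℝ), ∃ C > (0:ℝ), ∀ β : Fin d₁ → ℕ,
      ‖f β‖ ≤ C * Real.exp (ρ * msz β ^ (1/(2*s)))) :
    (∀ α : Fin d₂ → ℕ, Summable fun β => ‖a α β * f β‖) ∧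
    (∃ r' > (0:ℝ), ∃ C' > (0:ℝ), ∀ α : Fin d₂ → ℕ,
      ‖∑' β, a α β * f β‖ ≤ C' * Real.exp (-(r' * msz α ^ (1/(2*s))))) := by
  obtain ⟨r, hr, C, hC, ha⟩ := ha
  obtain ⟨Cf, hCf, hf⟩ := hf (r / 2) (by positivity)
  set t : ℝ := 1 / (2 * s)
  set w : (Fin d₁ → ℕ) → ℝ := fun β => exp (-(r / 2 * msz β ^ t))
  have hw : Summable w := summable_exp_neg_mul_msz_rpow (by positivity) (by positivity)
  have hbound : ∀ α β, ‖a α β * f β‖ ≤ C * Cf * exp (-(r * msz α ^ t)) * w β := by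
    intro α β
    calc ‖a α β * f β‖
        ≤ C * exp (-(r * (msz α ^ t + msz β ^ t))) * (Cf * exp (r / 2 * msz β ^ t)) := by
          rw [norm_mul]; exact mul_le_mul (ha α β) (hf β) (norm_nonneg _) (by positivity)
      _ = C * Cf * exp (-(r * msz α ^ t)) * w β := by
          simp only [w, mul_assoc, mul_left_comm _ Cf, ← exp_add]; ring_nf
  have hsummable α : Summable fun β => ‖a α β * f β‖ :=
    (hw.mul_left _).of_nonneg_of_le (fun β => norm_nonneg _) (hbound α)
  refine ⟨hsummable, r, hr, C * Cf * ∑' β, w β,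
    by positivity [hw.tsum_pos (fun β => (exp_pos _).le) 0 (exp_pos _)], fun α => ?_⟩
  calc ‖∑' β, a α β * f β‖ ≤ ∑' β, ‖a α β * f β‖ := norm_tsum_le_tsum_norm (hsummable α)
    _ ≤ ∑' β, C * Cf * exp (-(r * msz α ^ t)) * w β :=
        (hsummable α).tsum_le_tsum (hbound α) (hw.mul_left _)
    _ = C * Cf * (∑' β, w β) * exp (-(r * msz α ^ t)) := by rw [tsum_mul_left]; ring

/-- A matrix in `ℓ_s` (Roumieu decay in both indices, for some `r > 0`)
maps `ℓ_s'` (subexponential growth for every `ρ > 0`) into `ℓ_s`: the series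
`(Af)(α) = ∑_β a(α,β) f(β)` converges absolutely and decays like `e^{-r'|α|^{1/(2s)}}`
for some `r' > 0`. -/
theorem stmt2
    (s : ℝ) (hs : 0 < s) (d₁ d₂ : ℕ) (hd₁ : 1 ≤ d₁) (hd₂ : 1 ≤ d₂)
    (a : (Fin d₂ → ℕ) → (Fin d₁ → ℕ) → ℂ)
    (ha : ∃ r > (0:ℝ), ∃ C > (0:ℝ), ∀ (α : Fin d₂ → ℕ) (β : Fin d₁ → ℕ),
      ‖a α β‖ ≤ C * Real.exp (-(r * (msz α ^ (1/(2*s)) + msz β ^ (1/(2*s))))))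
    (f : (Fin d₁ → ℕ) → ℂ)
    (hf : ∀ ρ > (0:ℝ), ∃ C > (0:ℝ), ∀ β : Fin d₁ → ℕ,
      ‖f β‖ ≤ C * Real.exp (ρ * msz β ^ (1/(2*s)))) :
    (∀ α : Fin d₂ → ℕ, Summable fun β => ‖a α β * f β‖) ∧
    (∃ r' > (0:ℝ), ∃ C' > (0:ℝ), ∀ α : Fin d₂ → ℕ,
      ‖∑' β, a α β * f β‖ ≤ C' * Real.exp (-(r' * msz α ^ (1/(2*s))))) :=
  stmt2_general s hs d₁ d₂ a ha f hf
end

section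
/- Let s > 0 and d₁, d₂ ≥ 1, and let a : ℕ^{d₂} × ℕ^{d₁} → ℂ satisfy sup_{α,β} |a(α,β)| e^{r(|α|^{1/(2s)} + |β|^{1/(2s)})} < ∞ for every r > 0. Then there exist a matrix b : ℕ^{d₂} × ℕ^{d₁} → ℂ and strictly positive real numbers (λ_β)_{β∈ℕ^{d₁}} such that a(α,β) = b(α,β)·λ_β for all α, β, and such that for every r > 0 one has sup_{α,β} |b(α,β)| e^{r(|α|^{1/(2s)} + |β|^{1/(2s)})} < ∞ and sup_β λ_β e^{r|β|^{1/(2s)}} < ∞. (Hence the operator with matrix a factorizes as the composition of the operator with matrix b and the positive diagonal operator with eigenvalues λ_β, both factors having matrices of the same Beurling-Pilipović decay class as a.) -/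
open Real

def HasRapidDecay {κ : Type*} (w : κ → ℝ) (f : κ → ℝ) : Prop :=
  ∀ r > (0 : ℝ), ∃ C : ℝ, ∀ j, f j * exp (r * w j) ≤ C

def HasRapidDecay₂ {ι κ : Type*} (u : ι → ℝ) (v : κ → ℝ) (a : ι → κ → ℂ) : Prop :=
  ∀ r > (0 : ℝ), ∃ C : ℝ, ∀ i j, ‖a i j‖ * exp (r * (u i + v j)) ≤ C

lemma sqrt_mul_exp_le_sqrt {x t C : ℝ} (hx : 0 ≤ x) (h : x * exp (2 * t) ≤ C) :
    √x * exp t ≤ √C := by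
  calc √x * exp t = √(x * exp (2 * t)) := by
        rw [sqrt_mul hx, two_mul, exp_add, sqrt_mul_self (exp_nonneg t)]
    _ ≤ √C := sqrt_le_sqrt h

lemma exp_neg_sq_mul_exp_le (t r : ℝ) : exp (-t ^ 2) * exp (r * t) ≤ exp (r ^ 2 / 4) := by
  rw [← exp_add, exp_le_exp]
  nlinarith [sq_nonneg (t - r / 2)]

lemma div_le_sqrt_of_sqrt_le {x y : ℝ} (hx : 0 ≤ x) (h : √x ≤ y) : x / y ≤ √x :=
  div_le_of_le_mul₀ ((sqrt_nonneg x).trans h) (sqrt_nonneg x) <| by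
    calc x = √x * √x := (mul_self_sqrt hx).symm
      _ ≤ √x * y := mul_le_mul_of_nonneg_left h (sqrt_nonneg x)

lemma HasRapidDecay.sqrt_add_exp_neg_sq {κ : Type*} {v m : κ → ℝ} (hm : HasRapidDecay v m)
    (hm₀ : ∀ j, 0 ≤ m j) : HasRapidDecay v fun j => √(m j) + exp (-v j ^ 2) := by
  intro r hr
  obtain ⟨C, hC⟩ := hm (2 * r) (by positivity)
  refine ⟨√C + exp (r ^ 2 / 4), fun j => ?_⟩
  rw [add_mul]
  gcongr
  · exact sqrt_mul_exp_le_sqrt (hm₀ j) (by simpa only [mul_assoc] using hC j)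
  · exact exp_neg_sq_mul_exp_le (v j) r

lemma HasRapidDecay₂.of_norm_le_sqrt {ι κ : Type*} {u : ι → ℝ} {v : κ → ℝ} {a b : ι → κ → ℂ}
    (ha : HasRapidDecay₂ u v a) (hb : ∀ i j, ‖b i j‖ ≤ √‖a i j‖) : HasRapidDecay₂ u v b := by
  intro r hr
  obtain ⟨C, hC⟩ := ha (2 * r) (by positivity)
  refine ⟨√C, fun i j => ?_⟩
  calc ‖b i j‖ * exp (r * (u i + v j)) ≤ √‖a i j‖ * exp (r * (u i + v j)) := by gcongr; exact hb i j
    _ ≤ √C := sqrt_mul_exp_le_sqrt (norm_nonneg _) (by simpa only [mul_assoc] using hC i j)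

section ColumnSup

variable {ι κ : Type*} {u : ι → ℝ} {v : κ → ℝ} {a : ι → κ → ℂ}

-- The real `⨆` is `0` on an unbounded column, so `norm_le_colSup` needs the decay of `a`.
noncomputable def colSup (a : ι → κ → ℂ) (j : κ) : ℝ := ⨆ i, ‖a i j‖

lemma colSup_nonneg (j : κ) : 0 ≤ colSup a j :=
  Real.iSup_nonneg fun _ => norm_nonneg _

lemma HasRapidDecay₂.norm_mul_exp_le (hu : ∀ i, 0 ≤ u i) (ha : HasRapidDecay₂ u v a) :
    ∀ r > (0 : ℝ), ∃ C : ℝ, ∀ i j, ‖a i j‖ * exp (r * v j) ≤ C := by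
  intro r hr
  obtain ⟨C, hC⟩ := ha r hr
  refine ⟨C, fun i j => le_trans ?_ (hC i j)⟩
  gcongr
  linarith [hu i]

lemma HasRapidDecay₂.norm_le_colSup (hu : ∀ i, 0 ≤ u i) (ha : HasRapidDecay₂ u v a)
    (i : ι) (j : κ) : ‖a i j‖ ≤ colSup a j := by
  obtain ⟨C, hC⟩ := ha.norm_mul_exp_le hu 1 one_pos
  refine le_ciSup (f := fun i => ‖a i j‖) ⟨C / exp (1 * v j), ?_⟩ i
  rintro _ ⟨i', rfl⟩
  exact (le_div_iff₀ (exp_pos _)).2 (hC i' j)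

lemma HasRapidDecay₂.hasRapidDecay_colSup (hu : ∀ i, 0 ≤ u i) (ha : HasRapidDecay₂ u v a) :
    HasRapidDecay v (colSup a) := by
  intro r hr
  obtain ⟨C, hC⟩ := ha.norm_mul_exp_le hu r hr
  refine ⟨max C 0, fun j => ?_⟩
  rw [colSup, Real.iSup_mul_of_nonneg (exp_nonneg _)]
  exact Real.iSup_le (fun i => (hC i j).trans (le_max_left C 0)) (le_max_right C 0)

theorem HasRapidDecay₂.exists_eq_mul_diagonal (hu : ∀ i, 0 ≤ u i) (ha : HasRapidDecay₂ u v a) :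
    ∃ b : ι → κ → ℂ, ∃ lam : κ → ℝ, (∀ j, 0 < lam j) ∧ (∀ i j, a i j = b i j * (lam j : ℂ)) ∧
      HasRapidDecay₂ u v b ∧ HasRapidDecay v lam := by
  set lam : κ → ℝ := fun j => √(colSup a j) + exp (-v j ^ 2)
  have hlam : ∀ j, 0 < lam j := fun j => add_pos_of_nonneg_of_pos (sqrt_nonneg _) (exp_pos _)
  refine ⟨fun i j => a i j / (lam j : ℂ), lam, hlam, fun i j => ?_, ?_,
    (ha.hasRapidDecay_colSup hu).sqrt_add_exp_neg_sq colSup_nonneg⟩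
  · rw [div_mul_cancel₀]
    exact_mod_cast (hlam j).ne'
  · refine ha.of_norm_le_sqrt fun i j => ?_
    rw [norm_div, Complex.norm_real, norm_of_nonneg (hlam j).le]
    refine div_le_sqrt_of_sqrt_le (norm_nonneg _) ?_
    calc √‖a i j‖ ≤ √(colSup a j) := sqrt_le_sqrt (ha.norm_le_colSup hu i j)
      _ ≤ lam j := le_add_of_nonneg_right (exp_nonneg _)

end ColumnSup

theorem stmt6_general
    (s : ℝ) (d₁ d₂ : ℕ)
    (a : (Fin d₂ → ℕ) → (Fin d₁ → ℕ) → ℂ)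
    (ha : ∀ r > (0:ℝ), ∃ C : ℝ, ∀ (α : Fin d₂ → ℕ) (β : Fin d₁ → ℕ),
      ‖a α β‖ * Real.exp (r * (msz α ^ (1/(2*s)) + msz β ^ (1/(2*s)))) ≤ C) :
    ∃ b : (Fin d₂ → ℕ) → (Fin d₁ → ℕ) → ℂ, ∃ lam : (Fin d₁ → ℕ) → ℝ,
      (∀ β, 0 < lam β) ∧
      (∀ (α : Fin d₂ → ℕ) (β : Fin d₁ → ℕ), a α β = b α β * (lam β : ℂ)) ∧
      (∀ r > (0:ℝ), ∃ C : ℝ, ∀ (α : Fin d₂ → ℕ) (β : Fin d₁ → ℕ),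
        ‖b α β‖ * Real.exp (r * (msz α ^ (1/(2*s)) + msz β ^ (1/(2*s)))) ≤ C) ∧
      (∀ r > (0:ℝ), ∃ C : ℝ, ∀ β : Fin d₁ → ℕ,
        lam β * Real.exp (r * msz β ^ (1/(2*s))) ≤ C) :=
  HasRapidDecay₂.exists_eq_mul_diagonal (u := fun α => msz α ^ (1/(2*s)))
    (fun _ => rpow_nonneg (Nat.cast_nonneg _) _) ha

/-- Factorization of a Beurling–Pilipović matrix. If
`sup_{α,β} |a(α,β)| e^{r(|α|^{1/(2s)}+|β|^{1/(2s)})} < ∞` for every `r > 0`, then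
`a(α,β) = b(α,β)·λ_β` where `b` satisfies bounds of the same type for every `r > 0`
and the strictly positive diagonal `λ` satisfies `sup_β λ_β e^{r|β|^{1/(2s)}} < ∞`
for every `r > 0`. -/
theorem stmt6
    (s : ℝ) (hs : 0 < s) (d₁ d₂ : ℕ) (hd₁ : 1 ≤ d₁) (hd₂ : 1 ≤ d₂)
    (a : (Fin d₂ → ℕ) → (Fin d₁ → ℕ) → ℂ)
    (ha : ∀ r > (0:ℝ), ∃ C : ℝ, ∀ (α : Fin d₂ → ℕ) (β : Fin d₁ → ℕ),
      ‖a α β‖ * Real.exp (r * (msz α ^ (1/(2*s)) + msz β ^ (1/(2*s)))) ≤ C) :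
    ∃ b : (Fin d₂ → ℕ) → (Fin d₁ → ℕ) → ℂ, ∃ lam : (Fin d₁ → ℕ) → ℝ,
      (∀ β, 0 < lam β) ∧
      (∀ (α : Fin d₂ → ℕ) (β : Fin d₁ → ℕ), a α β = b α β * (lam β : ℂ)) ∧
      (∀ r > (0:ℝ), ∃ C : ℝ, ∀ (α : Fin d₂ → ℕ) (β : Fin d₁ → ℕ),
        ‖b α β‖ * Real.exp (r * (msz α ^ (1/(2*s)) + msz β ^ (1/(2*s)))) ≤ C) ∧
      (∀ r > (0:ℝ), ∃ C : ℝ, ∀ β : Fin d₁ → ℕ,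
        lam β * Real.exp (r * msz β ^ (1/(2*s))) ≤ C) :=
  stmt6_general s d₁ d₂ a ha
end

section
/- Let σ > 0 and d₁, d₂ ≥ 1, and let a : ℕ^{d₂} × ℕ^{d₁} → ℂ satisfy |a(α,β)| ≤ C R^{|α|+|β|} (α! β!)^{−1/(2σ)} for some C, R > 0 and all α, β. Then there exist constants C', h, c > 0, strictly positive families (λ_β)_{β∈ℕ^{d₁}} and (μ_α)_{α∈ℕ^{d₂}}, and a matrix a₀ : ℕ^{d₂} × ℕ^{d₁} → ℂ, such that a(α,β) = μ_α · a₀(α,β) · λ_β for all α, β, with λ_β ≤ C' h^{|β|} (β!)^{−1/(2σ)}, μ_α ≤ C' h^{|α|} (α!)^{−1/(2σ)}, and |a₀(α,β)| ≤ C' e^{−c(|α|+|β|)}. (Hence the operator with matrix a factorizes as Λ₂ ∘ A₀ ∘ Λ₁ with Λ₁, Λ₂ positive diagonal operators whose diagonal kernels lie in the class 𝓗_{♭_{2σ}}, and A₀ with kernel in the class 𝓗_{1/2}.) -/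
/-- `|α| = α₁ + ⋯ + α_d`. -/
def msznat {d : ℕ} (α : Fin d → ℕ) : ℕ := ∑ i, α i

/-- `α! = α₁!⋯α_d!` as a real number. -/
noncomputable def mfact {d : ℕ} (α : Fin d → ℕ) : ℝ := ∏ i, (Nat.factorial (α i) : ℝ)

/-!
Take both diagonals to be the Gevrey weight `h^{|α|} (α!)^{-1/(2σ)}` with `h = e R` and put
`a₀(α,β) = a(α,β) / (μ_α λ_β)`. The factorials cancel, and `R^{|α|+|β|} / h^{|α|+|β|}` is the
exponential decay `e^{-(|α|+|β|)}`.
-/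

open Real

lemma mfact_pos {d : ℕ} (α : Fin d → ℕ) : 0 < mfact α :=
  Finset.prod_pos fun i _ => by exact_mod_cast (α i).factorial_pos

noncomputable def gevreyWeight {d : ℕ} (h s : ℝ) (α : Fin d → ℕ) : ℝ :=
  h ^ msznat α * mfact α ^ s

section GevreyWeight

variable {d d' : ℕ} {h s : ℝ}

lemma gevreyWeight_pos (hh : 0 < h) (α : Fin d → ℕ) : 0 < gevreyWeight h s α :=
  mul_pos (pow_pos hh _) (rpow_pos_of_pos (mfact_pos α) s)

lemma gevreyWeight_le {C : ℝ} (hC : 1 ≤ C) (hh : 0 < h) (α : Fin d → ℕ) :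
    gevreyWeight h s α ≤ C * h ^ msznat α * mfact α ^ s := by
  rw [mul_assoc]
  exact le_mul_of_one_le_left (gevreyWeight_pos hh α).le hC

lemma gevreyWeight_mul_gevreyWeight (α : Fin d → ℕ) (β : Fin d' → ℕ) :
    gevreyWeight h s α * gevreyWeight h s β =
      h ^ (msznat α + msznat β) * (mfact α * mfact β) ^ s := by
  rw [gevreyWeight, gevreyWeight, pow_add, mul_rpow (mfact_pos α).le (mfact_pos β).le]
  ring

lemma exp_neg_mul_mul_exp_one_pow (R : ℝ) (n : ℕ) : exp (-n) * (R * exp 1) ^ n = R ^ n := by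
  rw [mul_pow, ← exp_nat_mul, mul_one, mul_left_comm, ← exp_add, neg_add_cancel, exp_zero,
    mul_one]

lemma norm_div_gevreyWeight_mul_le {C R : ℝ} (hR : 0 < R) {α : Fin d → ℕ} {β : Fin d' → ℕ}
    {z : ℂ} (hz : ‖z‖ ≤ C * R ^ (msznat α + msznat β) * (mfact α * mfact β) ^ s) :
    ‖z / ((gevreyWeight (R * exp 1) s α * gevreyWeight (R * exp 1) s β : ℝ) : ℂ)‖ ≤
      C * exp (-(msznat α + msznat β : ℕ)) := by
  have hh : 0 < R * exp 1 := by positivity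
  have hw := mul_pos (gevreyWeight_pos (s := s) hh α) (gevreyWeight_pos (s := s) hh β)
  rw [norm_div, Complex.norm_real, norm_of_nonneg hw.le, div_le_iff₀ hw,
    gevreyWeight_mul_gevreyWeight, ← mul_assoc, mul_assoc C, exp_neg_mul_mul_exp_one_pow]
  exact hz

end GevreyWeight

theorem stmt7_general
    (σ : ℝ) (d₁ d₂ : ℕ)
    (a : (Fin d₂ → ℕ) → (Fin d₁ → ℕ) → ℂ)
    (ha : ∃ C > (0:ℝ), ∃ R > (0:ℝ), ∀ (α : Fin d₂ → ℕ) (β : Fin d₁ → ℕ),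
      ‖a α β‖ ≤ C * R ^ (msznat α + msznat β) * (mfact α * mfact β) ^ (-(1/(2*σ)))) :
    ∃ C' > (0:ℝ), ∃ h > (0:ℝ), ∃ c > (0:ℝ),
    ∃ lam : (Fin d₁ → ℕ) → ℝ, ∃ mu : (Fin d₂ → ℕ) → ℝ,
    ∃ a₀ : (Fin d₂ → ℕ) → (Fin d₁ → ℕ) → ℂ,
      (∀ β, 0 < lam β) ∧ (∀ α, 0 < mu α) ∧
      (∀ (α : Fin d₂ → ℕ) (β : Fin d₁ → ℕ),
        a α β = (mu α : ℂ) * a₀ α β * (lam β : ℂ)) ∧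
      (∀ β : Fin d₁ → ℕ, lam β ≤ C' * h ^ msznat β * mfact β ^ (-(1/(2*σ)))) ∧
      (∀ α : Fin d₂ → ℕ, mu α ≤ C' * h ^ msznat α * mfact α ^ (-(1/(2*σ)))) ∧
      (∀ (α : Fin d₂ → ℕ) (β : Fin d₁ → ℕ),
        ‖a₀ α β‖ ≤ C' * Real.exp (-(c * (msznat α + msznat β : ℕ)))) := by
  obtain ⟨C, -, R, hR, hbound⟩ := ha
  set w : {d : ℕ} → (Fin d → ℕ) → ℝ := gevreyWeight (R * exp 1) (-(1/(2*σ)))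
  have hh : 0 < R * exp 1 := by positivity
  have hw : ∀ {d} (α : Fin d → ℕ), 0 < w α := gevreyWeight_pos hh
  refine ⟨max C 1, by positivity, R * exp 1, hh, 1, one_pos, w, w,
    fun α β => a α β / ((w α * w β : ℝ) : ℂ), hw, hw, fun α β => ?_,
    gevreyWeight_le (le_max_right C 1) hh, gevreyWeight_le (le_max_right C 1) hh,
    fun α β => ?_⟩
  · have hα : (w α : ℂ) ≠ 0 := Complex.ofReal_ne_zero.mpr (hw α).ne'
    have hβ : (w β : ℂ) ≠ 0 := Complex.ofReal_ne_zero.mpr (hw β).ne'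
    push_cast
    field_simp
  · rw [one_mul]
    refine (norm_div_gevreyWeight_mul_le hR (hbound α β)).trans ?_
    gcongr
    exact le_max_left C 1

/-- Factorization of a matrix of class `𝓗_{♭_σ}`: if
`|a(α,β)| ≤ C R^{|α|+|β|} (α!β!)^{-1/(2σ)}`, then `a(α,β) = μ_α · a₀(α,β) · λ_β` where the
strictly positive diagonals satisfy `λ_β ≤ C' h^{|β|} (β!)^{-1/(2σ)}`,
`μ_α ≤ C' h^{|α|} (α!)^{-1/(2σ)}` (class `𝓗_{♭_{2σ}}` diagonal kernels), and
`|a₀(α,β)| ≤ C' e^{-c(|α|+|β|)}` (class `𝓗_{1/2}`). -/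
theorem stmt7
    (σ : ℝ) (hσ : 0 < σ) (d₁ d₂ : ℕ) (hd₁ : 1 ≤ d₁) (hd₂ : 1 ≤ d₂)
    (a : (Fin d₂ → ℕ) → (Fin d₁ → ℕ) → ℂ)
    (ha : ∃ C > (0:ℝ), ∃ R > (0:ℝ), ∀ (α : Fin d₂ → ℕ) (β : Fin d₁ → ℕ),
      ‖a α β‖ ≤ C * R ^ (msznat α + msznat β) * (mfact α * mfact β) ^ (-(1/(2*σ)))) :
    ∃ C' > (0:ℝ), ∃ h > (0:ℝ), ∃ c > (0:ℝ),
    ∃ lam : (Fin d₁ → ℕ) → ℝ, ∃ mu : (Fin d₂ → ℕ) → ℝ,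
    ∃ a₀ : (Fin d₂ → ℕ) → (Fin d₁ → ℕ) → ℂ,
      (∀ β, 0 < lam β) ∧ (∀ α, 0 < mu α) ∧
      (∀ (α : Fin d₂ → ℕ) (β : Fin d₁ → ℕ),
        a α β = (mu α : ℂ) * a₀ α β * (lam β : ℂ)) ∧
      (∀ β : Fin d₁ → ℕ, lam β ≤ C' * h ^ msznat β * mfact β ^ (-(1/(2*σ)))) ∧
      (∀ α : Fin d₂ → ℕ, mu α ≤ C' * h ^ msznat α * mfact α ^ (-(1/(2*σ)))) ∧
      (∀ (α : Fin d₂ → ℕ) (β : Fin d₁ → ℕ),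
        ‖a₀ α β‖ ≤ C' * Real.exp (-(c * (msznat α + msznat β : ℕ)))) :=
  stmt7_general σ d₁ d₂ a ha
end

section
/- Let s > 0 and d ≥ 1, and let T : ℓ²(ℕ^d) → ℓ²(ℕ^d) be the bounded diagonal operator with T e_α = c_α e_α for all α ∈ ℕ^d, where the eigenvalues satisfy 0 ≤ c_α ≤ C e^{−r|α|^{1/(2s)}} for some C, r > 0. Then there exist C', c' > 0 such that σ_k(T) ≤ C' e^{−c' k^{1/(2ds)}} for every k ≥ 1. -/
/-- The `k`-th singular value (`k ≥ 1`) of a bounded linear operator `T`: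
`σ_k(T) = inf {‖T - T₀‖ : T₀ bounded linear of rank ≤ k - 1}`. -/
noncomputable def singValue {B₁ B₂ : Type*} [NormedAddCommGroup B₁] [NormedSpace ℂ B₁]
    [NormedAddCommGroup B₂] [NormedSpace ℂ B₂] (T : B₁ →L[ℂ] B₂) (k : ℕ) : ℝ :=
  sInf {r : ℝ | ∃ T₀ : B₁ →L[ℂ] B₂,
    Module.rank ℂ (LinearMap.range (T₀ : B₁ →ₗ[ℂ] B₂)) ≤ (k - 1 : ℕ) ∧ r = ‖T - T₀‖}

open scoped ENNReal

namespace lp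

section RCLike

variable {𝕜 : Type*} [RCLike 𝕜] {ι : Type*} {p : ℝ≥0∞} [Fact (1 ≤ p)]

theorem opNorm_le_of_apply_eq_mul (D : lp (fun _ : ι => 𝕜) p →L[𝕜] lp (fun _ : ι => 𝕜) p)
    (w : ι → 𝕜) (hD : ∀ f j, D f j = w j * f j) {ε : ℝ} (hε : 0 ≤ ε) (hw : ∀ j, ‖w j‖ ≤ ε) :
    ‖D‖ ≤ ε := by
  have hp : p ≠ 0 := (zero_lt_one.trans_le Fact.out).ne'
  have hnorm : ‖(ε : 𝕜)‖ = ε := by rw [RCLike.norm_ofReal, abs_of_nonneg hε]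
  refine D.opNorm_le_bound hε fun f => ?_
  calc ‖D f‖ ≤ ‖(ε : 𝕜) • f‖ := norm_mono hp fun j => by
        rw [hD, lp.coeFn_smul, Pi.smul_apply, norm_mul, norm_smul, hnorm]
        gcongr
        exact hw j
    _ = ε * ‖f‖ := by rw [norm_smul, hnorm]

end RCLike

section Field

variable {𝕜 : Type*} [NontriviallyNormedField 𝕜] {ι : Type*} [DecidableEq ι] {p : ℝ≥0∞}
  [Fact (1 ≤ p)]

theorem apply_eq_mul_of_apply_single (hp : p ≠ ⊤)
    (T : lp (fun _ : ι => 𝕜) p →L[𝕜] lp (fun _ : ι => 𝕜) p) (c : ι → 𝕜)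
    (hT : ∀ i, T (lp.single p i 1) = c i • lp.single p i 1) (f : lp (fun _ : ι => 𝕜) p) (j : ι) :
    T f j = c j * f j := by
  suffices (evalCLM 𝕜 _ p j).comp T = c j • evalCLM 𝕜 _ p j from
    congrArg (fun L : lp (fun _ : ι => 𝕜) p →L[𝕜] 𝕜 => L f) this
  refine ext_continuousLinearMap hp fun i => ContinuousLinearMap.ext_ring ?_
  change T (lp.single p i 1) j = c j * (lp.single p i (1 : 𝕜) : ι → 𝕜) j
  rw [hT]
  by_cases h : j = i
  · subst h; simp
  · simp [h]

variable (𝕜 p) in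
noncomputable def finsetProj (S : Finset ι) :
    lp (fun _ : ι => 𝕜) p →L[𝕜] lp (fun _ : ι => 𝕜) p :=
  ∑ i ∈ S, (singleContinuousLinearMap 𝕜 _ p i).comp (evalCLM 𝕜 _ p i)

theorem finsetProj_apply_eq_sum (S : Finset ι) (f : lp (fun _ : ι => 𝕜) p) :
    finsetProj 𝕜 p S f = ∑ i ∈ S, lp.single p i (f i) := by
  simp [finsetProj, evalCLM]

theorem finsetProj_apply (S : Finset ι) (f : lp (fun _ : ι => 𝕜) p) (j : ι) :
    finsetProj 𝕜 p S f j = if j ∈ S then f j else 0 := by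
  rw [finsetProj_apply_eq_sum, lp.coeFn_sum, Finset.sum_apply]
  simp only [lp.single_apply, Finset.sum_pi_single]

theorem rank_finsetProj_le (S : Finset ι) :
    LinearMap.rank (finsetProj 𝕜 p S : lp (fun _ : ι => 𝕜) p →ₗ[𝕜] lp (fun _ : ι => 𝕜) p) ≤
      S.card := by
  classical
  have hrange : LinearMap.range (finsetProj 𝕜 p S : lp (fun _ : ι => 𝕜) p →ₗ[𝕜] _) ≤
      Submodule.span 𝕜 ((S.image fun i => lp.single p i (1 : 𝕜)) : Set (lp (fun _ : ι => 𝕜) p)) := by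
    rintro _ ⟨f, rfl⟩
    rw [ContinuousLinearMap.coe_coe, finsetProj_apply_eq_sum]
    refine Submodule.sum_mem _ fun i hi => ?_
    rw [← mul_one (f i), ← smul_eq_mul, lp.single_smul]
    exact Submodule.smul_mem _ _ (Submodule.subset_span (Finset.mem_image_of_mem _ hi))
  calc LinearMap.rank _ ≤ _ := Submodule.rank_mono hrange
    _ ≤ (S.image fun i => lp.single p i (1 : 𝕜)).card := rank_span_finset_le _
    _ ≤ S.card := by exact_mod_cast Finset.card_image_le

end Field

end lp

theorem singValue_le_norm_sub {B₁ B₂ : Type*} [NormedAddCommGroup B₁] [NormedSpace ℂ B₁]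
    [NormedAddCommGroup B₂] [NormedSpace ℂ B₂] (T T₀ : B₁ →L[ℂ] B₂) {k : ℕ}
    (hT₀ : LinearMap.rank (T₀ : B₁ →ₗ[ℂ] B₂) ≤ (k - 1 : ℕ)) : singValue T k ≤ ‖T - T₀‖ :=
  csInf_le ⟨0, by rintro _ ⟨_, _, rfl⟩; exact norm_nonneg _⟩ ⟨T₀, hT₀, rfl⟩

theorem singValue_le_of_apply_single {ι : Type*} [DecidableEq ι] {p : ℝ≥0∞} [Fact (1 ≤ p)]
    (hp : p ≠ ⊤) (T : lp (fun _ : ι => ℂ) p →L[ℂ] lp (fun _ : ι => ℂ) p) (c : ι → ℂ)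
    (hT : ∀ i, T (lp.single p i 1) = c i • lp.single p i 1) {k : ℕ} (S : Finset ι)
    (hS : S.card ≤ k - 1) {ε : ℝ} (hε : 0 ≤ ε) (hc : ∀ i ∉ S, ‖c i‖ ≤ ε) :
    singValue T k ≤ ε := by
  have hrank : LinearMap.rank
      ((T.comp (lp.finsetProj ℂ p S) : lp (fun _ : ι => ℂ) p →L[ℂ] lp (fun _ : ι => ℂ) p) :
        lp (fun _ : ι => ℂ) p →ₗ[ℂ] lp (fun _ : ι => ℂ) p) ≤ (k - 1 : ℕ) := by
    rw [ContinuousLinearMap.toLinearMap_comp]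
    exact (LinearMap.rank_comp_le_right _ _).trans
      ((lp.rank_finsetProj_le S).trans (by exact_mod_cast hS))
  refine (singValue_le_norm_sub T _ hrank).trans
    (lp.opNorm_le_of_apply_eq_mul _ (fun j => if j ∈ S then 0 else c j) (fun f j => ?_) hε
      fun j => ?_)
  · rw [sub_apply, ContinuousLinearMap.comp_apply, lp.coeFn_sub,
      Pi.sub_apply, lp.apply_eq_mul_of_apply_single hp T c hT,
      lp.apply_eq_mul_of_apply_single hp T c hT, lp.finsetProj_apply]
    split_ifs <;> ring
  · split_ifs with h
    · simpa using hε
    · exact hc j h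

theorem le_sum_of_notMem_piFinset_range {ι : Type*} [Fintype ι] [DecidableEq ι] {m : ℕ}
    {β : ι → ℕ} (hβ : β ∉ Fintype.piFinset fun _ => Finset.range m) : m ≤ ∑ i, β i := by
  simp only [Fintype.mem_piFinset, Finset.mem_range, not_forall, not_lt] at hβ
  obtain ⟨i, hi⟩ := hβ
  exact hi.trans (Finset.single_le_sum (fun j _ => Nat.zero_le _) (Finset.mem_univ i))

theorem Nat.exists_pow_lt_le_add_one_pow {d k : ℕ} (hd : d ≠ 0) (hk : 0 < k) :
    ∃ m, m ^ d < k ∧ k ≤ (m + 1) ^ d := by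
  classical
  have h : ∃ n, k ≤ n ^ d := ⟨k, Nat.le_self_pow hd k⟩
  have hpos : 0 < Nat.find h := by
    by_contra h0
    have := Nat.find_spec h
    rw [Nat.eq_zero_of_not_pos h0, zero_pow hd] at this
    omega
  refine ⟨Nat.find h - 1, ?_, ?_⟩
  · exact not_le.mp (Nat.find_min h (by omega))
  · rw [Nat.sub_add_cancel hpos]
    exact Nat.find_spec h

theorem Real.add_one_rpow_le {y a : ℝ} (hy : 0 ≤ y) (ha : 0 ≤ a) :
    (y + 1) ^ a ≤ 2 ^ a * (y ^ a + 1) := by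
  rcases le_total y 1 with hy1 | hy1
  · calc (y + 1) ^ a ≤ 2 ^ a := by gcongr; linarith
      _ ≤ 2 ^ a * (y ^ a + 1) :=
        le_mul_of_one_le_right (by positivity) (by linarith [Real.rpow_nonneg hy a])
  · calc (y + 1) ^ a ≤ (2 * y) ^ a := by gcongr; linarith
      _ = 2 ^ a * y ^ a := Real.mul_rpow zero_le_two hy
      _ ≤ 2 ^ a * (y ^ a + 1) := by gcongr; linarith

theorem Real.exp_neg_mul_rpow_le {r a y z : ℝ} (hr : 0 ≤ r) (ha : 0 ≤ a) (hy : 0 ≤ y)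
    (hz : z ≤ (y + 1) ^ a) :
    Real.exp (-(r * y ^ a)) ≤ Real.exp r * Real.exp (-(r / 2 ^ a * z)) := by
  rw [← Real.exp_add, Real.exp_le_exp]
  have : r / 2 ^ a * z ≤ r * (y ^ a + 1) := calc
    r / 2 ^ a * z ≤ r / 2 ^ a * (2 ^ a * (y ^ a + 1)) := by
      gcongr; exact hz.trans (Real.add_one_rpow_le hy ha)
    _ = r * (y ^ a + 1) := by field_simp
  linarith

/-- If `T` is the bounded diagonal operator on `ℓ²(ℕ^d)` with
`T e_α = c_α e_α` and `0 ≤ c_α ≤ C e^{-r|α|^{1/(2s)}}`, then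
`σ_k(T) ≤ C' e^{-c' k^{1/(2ds)}}` for some `C', c' > 0` and all `k ≥ 1`. -/
theorem stmt10
    (s : ℝ) (hs : 0 < s) (d : ℕ) (hd : 1 ≤ d)
    (T : lp (fun _ : (Fin d → ℕ) => ℂ) 2 →L[ℂ] lp (fun _ : (Fin d → ℕ) => ℂ) 2)
    (c : (Fin d → ℕ) → ℝ)
    (hdiag : ∀ α : Fin d → ℕ, T (lp.single 2 α 1) = (c α : ℂ) • lp.single 2 α 1)
    (C r : ℝ) (hC : 0 < C) (hr : 0 < r)
    (hc : ∀ α : Fin d → ℕ, 0 ≤ c α ∧ c α ≤ C * Real.exp (-(r * msz α ^ (1/(2*s))))) :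
    ∃ C' > (0:ℝ), ∃ c' > (0:ℝ), ∀ k : ℕ, 1 ≤ k →
      singValue T k ≤ C' * Real.exp (-(c' * (k : ℝ) ^ (1/(2*(d:ℝ)*s)))) := by
  set a := 1 / (2 * s)
  have ha : 0 ≤ a := by positivity
  refine ⟨C * Real.exp r, by positivity, r / 2 ^ a, by positivity, fun k hk => ?_⟩
  obtain ⟨m, hmk, hkm⟩ := Nat.exists_pow_lt_le_add_one_pow (by omega : d ≠ 0) hk
  have hkm' : (k : ℝ) ^ (1 / (2 * (d:ℝ) * s)) ≤ ((m : ℝ) + 1) ^ a := calc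
    (k : ℝ) ^ (1 / (2 * (d:ℝ) * s)) ≤ (((m : ℝ) + 1) ^ d) ^ (1 / (2 * (d:ℝ) * s)) := by
      gcongr; exact_mod_cast hkm
    _ = ((m : ℝ) + 1) ^ a := by
      rw [← Real.rpow_natCast, ← Real.rpow_mul (by positivity)]
      congr 1
      simp only [a]
      field_simp
  have hdecay : ∀ β ∉ Fintype.piFinset fun _ : Fin d => Finset.range m,
      ‖(c β : ℂ)‖ ≤ C * Real.exp (-(r * (m : ℝ) ^ a)) := by
    intro β hβ
    rw [Complex.norm_real, Real.norm_of_nonneg (hc β).1]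
    refine (hc β).2.trans ?_
    gcongr
    rw [msz]
    exact_mod_cast le_sum_of_notMem_piFinset_range hβ
  calc singValue T k ≤ C * Real.exp (-(r * (m : ℝ) ^ a)) :=
        singValue_le_of_apply_single ENNReal.ofNat_ne_top T (fun β => (c β : ℂ)) hdiag _
          (by rw [Fintype.card_piFinset_const, Finset.card_range]; omega) (by positivity) hdecay
    _ ≤ C * (Real.exp r * Real.exp (-(r / 2 ^ a * (k : ℝ) ^ (1 / (2 * (d:ℝ) * s))))) := by
        gcongr; exact Real.exp_neg_mul_rpow_le hr.le ha m.cast_nonneg hkm'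
    _ = _ := by ring
end

section
/- Let s > 0, ρ > 0 and d ≥ 1, and let T be a bounded, self-adjoint, positive semi-definite linear operator on ℓ²(ℕ^d) whose matrix satisfies |⟨T e_β, e_α⟩| ≤ C e^{−r(|α|^{1/(2s)} + |β|^{1/(2s)})} for some C, r > 0 and all α, β ∈ ℕ^d. Let T^ρ denote the ρ-th power of T defined via the continuous functional calculus (applying t ↦ t^ρ to T). Then there exist C', r' > 0 such that |⟨T^ρ e_β, e_α⟩| ≤ C' e^{−r'(|α|^{1/(2s)} + |β|^{1/(2s)})} for all α, β ∈ ℕ^d. -/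
open scoped InnerProductSpace ComplexOrder

lemma Real.rpow_le_add_div_mul {ρ ε M x : ℝ} (hρ : 0 ≤ ρ) (hε : 0 < ε) (hx : 0 ≤ x)
    (hxM : x ≤ M) : x ^ ρ ≤ ε ^ ρ + M ^ ρ / ε * x := by
  have hMρ : 0 ≤ M ^ ρ / ε := by have := Real.rpow_nonneg (hx.trans hxM) ρ; positivity
  rcases le_or_gt x ε with hxε | hεx
  · have := Real.rpow_le_rpow hx hxε hρ
    nlinarith [mul_nonneg hMρ hx]
  · calc x ^ ρ ≤ M ^ ρ := Real.rpow_le_rpow hx hxM hρ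
      _ = M ^ ρ / ε * ε := by field_simp
      _ ≤ M ^ ρ / ε * x := by gcongr
      _ ≤ ε ^ ρ + M ^ ρ / ε * x := le_add_of_nonneg_left (Real.rpow_nonneg hε.le ρ)

section CStarAlgebra

variable {A : Type*} [CStarAlgebra A] [PartialOrder A] [StarOrderedRing A]

lemma cfc_rpow_le_algebraMap_add_smul {a : A} (ha : 0 ≤ a) {ρ ε : ℝ} (hρ : 0 ≤ ρ)
    (hε : 0 < ε) : cfc (fun x : ℝ => x ^ ρ) a ≤ algebraMap ℝ A (ε ^ ρ) + (‖a‖ ^ ρ / ε) • a := by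
  nontriviality A
  have hrhs : algebraMap ℝ A (ε ^ ρ) + (‖a‖ ^ ρ / ε) • a
      = cfc (fun x : ℝ => ε ^ ρ + ‖a‖ ^ ρ / ε * x) a := by
    rw [cfc_const_add .., cfc_const_mul .., cfc_id' ..]
  rw [hrhs]
  exact cfc_mono fun x hx => Real.rpow_le_add_div_mul hρ hε (spectrum_nonneg_of_nonneg ha hx)
    ((Real.le_norm_self x).trans (spectrum.norm_le_norm_of_mem hx))

end CStarAlgebra

section HilbertSpace

variable {E : Type*} [NormedAddCommGroup E] [InnerProductSpace ℂ E] [CompleteSpace E]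

lemma norm_inner_sq_le_of_nonneg {S : E →L[ℂ] E} (hS : 0 ≤ S) (x y : E) :
    ‖⟪S x, y⟫_ℂ‖ ^ 2 ≤ RCLike.re ⟪S x, x⟫_ℂ * RCLike.re ⟪S y, y⟫_ℂ := by
  obtain ⟨b, rfl⟩ := CStarAlgebra.nonneg_iff_eq_star_mul_self.1 hS
  have hb : ∀ x y : E, ⟪(star b * b) x, y⟫_ℂ = ⟪b x, b y⟫_ℂ := fun x y => by
    rw [ContinuousLinearMap.star_eq_adjoint, mul_apply_eq_comp,
      ContinuousLinearMap.adjoint_inner_left]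
  rw [hb, hb, hb, inner_self_eq_norm_sq, inner_self_eq_norm_sq, ← mul_pow]
  gcongr
  exact norm_inner_le_norm _ _

lemma re_inner_cfc_rpow_le {T : E →L[ℂ] E} (hT : 0 ≤ T) {ρ ε : ℝ} (hρ : 0 ≤ ρ) (hε : 0 < ε)
    (x : E) : RCLike.re ⟪cfc (fun t : ℝ => t ^ ρ) T x, x⟫_ℂ
      ≤ ε ^ ρ * ‖x‖ ^ 2 + ‖T‖ ^ ρ / ε * RCLike.re ⟪T x, x⟫_ℂ := by
  have h := ((ContinuousLinearMap.le_def _ _).1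
    (cfc_rpow_le_algebraMap_add_smul hT hρ hε)).re_inner_nonneg_left x
  simpa [inner_sub_left, inner_add_left, Algebra.algebraMap_eq_smul_one, ← Complex.ofReal_pow]
    using h

lemma re_inner_cfc_rpow_le_rpow {T : E →L[ℂ] E} (hT : 0 ≤ T) {ρ C δ : ℝ} (hρ : 0 ≤ ρ)
    (hδ : 0 < δ) {x : E} (hx : RCLike.re ⟪T x, x⟫_ℂ ≤ C * δ) :
    RCLike.re ⟪cfc (fun t : ℝ => t ^ ρ) T x, x⟫_ℂ
      ≤ (‖x‖ ^ 2 + C * ‖T‖ ^ ρ) * δ ^ (ρ / (ρ + 1)) := by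
  -- `ε` is chosen with `ε ^ (ρ + 1) = δ`, which balances the two terms of `re_inner_cfc_rpow_le`.
  set ε := δ ^ (1 / (ρ + 1))
  have hε : 0 < ε := Real.rpow_pos_of_pos hδ _
  have hερ : ε ^ ρ = δ ^ (ρ / (ρ + 1)) := by
    rw [← Real.rpow_mul hδ.le]; ring_nf
  have hδ_eq : δ = ε ^ ρ * ε := by
    rw [← Real.rpow_add_one hε.ne', ← Real.rpow_mul hδ.le, one_div,
      inv_mul_cancel₀ (by positivity), Real.rpow_one]
  calc RCLike.re ⟪cfc (fun t : ℝ => t ^ ρ) T x, x⟫_ℂ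
      ≤ ε ^ ρ * ‖x‖ ^ 2 + ‖T‖ ^ ρ / ε * RCLike.re ⟪T x, x⟫_ℂ := re_inner_cfc_rpow_le hT hρ hε x
    _ ≤ ε ^ ρ * ‖x‖ ^ 2 + ‖T‖ ^ ρ / ε * (C * δ) := by gcongr
    _ = (‖x‖ ^ 2 + C * ‖T‖ ^ ρ) * δ ^ (ρ / (ρ + 1)) := by
        rw [← hερ, hδ_eq]; field_simp

theorem norm_inner_cfc_rpow_le_of_re_inner_le {ι : Type*} {T : E →L[ℂ] E} (hT : 0 ≤ T)
    {ρ C r : ℝ} (hρ : 0 ≤ ρ) (hC : 0 ≤ C) (e : ι → E) (he : ∀ i, ‖e i‖ = 1) (u : ι → ℝ)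
    (hdiag : ∀ i, RCLike.re ⟪T (e i), e i⟫_ℂ ≤ C * Real.exp (-(r * (u i + u i)))) (i j : ι) :
    ‖⟪cfc (fun t : ℝ => t ^ ρ) T (e j), e i⟫_ℂ‖
      ≤ (1 + C * ‖T‖ ^ ρ) * Real.exp (-(r * ρ / (ρ + 1) * (u i + u j))) := by
  set K := 1 + C * ‖T‖ ^ ρ
  have hK : 0 ≤ K := by have := Real.rpow_nonneg (norm_nonneg T) ρ; positivity
  have hpow : ∀ k, RCLike.re ⟪cfc (fun t : ℝ => t ^ ρ) T (e k), e k⟫_ℂ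
      ≤ K * Real.exp (-(r * ρ / (ρ + 1) * (u k + u k))) := fun k => by
    convert re_inner_cfc_rpow_le_rpow hT hρ (Real.exp_pos _) (hdiag k) using 2
    · simp [he k, K]
    · rw [← Real.exp_mul]; ring_nf
  have hnonneg : 0 ≤ cfc (fun t : ℝ => t ^ ρ) T :=
    cfc_nonneg fun t ht => Real.rpow_nonneg (spectrum_nonneg_of_nonneg hT ht) ρ
  have hdiag_nonneg : ∀ k, 0 ≤ RCLike.re ⟪cfc (fun t : ℝ => t ^ ρ) T (e k), e k⟫_ℂ := fun k =>
    ((ContinuousLinearMap.nonneg_iff_isPositive _).1 hnonneg).re_inner_nonneg_left (e k)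
  refine le_of_pow_le_pow_left₀ two_ne_zero (by positivity) ?_
  calc ‖⟪cfc (fun t : ℝ => t ^ ρ) T (e j), e i⟫_ℂ‖ ^ 2
      ≤ RCLike.re ⟪cfc (fun t : ℝ => t ^ ρ) T (e j), e j⟫_ℂ
        * RCLike.re ⟪cfc (fun t : ℝ => t ^ ρ) T (e i), e i⟫_ℂ :=
        norm_inner_sq_le_of_nonneg hnonneg _ _
    _ ≤ K * Real.exp (-(r * ρ / (ρ + 1) * (u j + u j)))
        * (K * Real.exp (-(r * ρ / (ρ + 1) * (u i + u i)))) :=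
        mul_le_mul (hpow j) (hpow i) (hdiag_nonneg i) (by positivity)
    _ = (K * Real.exp (-(r * ρ / (ρ + 1) * (u i + u j)))) ^ 2 := by
        rw [sq, mul_mul_mul_comm, mul_mul_mul_comm K (Real.exp _), ← Real.exp_add, ← Real.exp_add]
        congr 2; ring

end HilbertSpace

theorem stmt16_general
    (s ρ : ℝ) (hρ : 0 < ρ) (d : ℕ)
    (T : lp (fun _ : (Fin d → ℕ) => ℂ) 2 →L[ℂ] lp (fun _ : (Fin d → ℕ) => ℂ) 2)
    (hpos : T.IsPositive)
    (C r : ℝ) (hC : 0 < C) (hr : 0 < r)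
    (ha : ∀ α β : Fin d → ℕ,
      ‖inner (𝕜 := ℂ) (T (lp.single 2 β 1)) (lp.single 2 α 1)‖
        ≤ C * Real.exp (-(r * (msz α ^ (1/(2*s)) + msz β ^ (1/(2*s)))))) :
    ∃ C' > (0:ℝ), ∃ r' > (0:ℝ), ∀ α β : Fin d → ℕ,
      ‖inner (𝕜 := ℂ) ((cfc (instCFC := IsSelfAdjoint.instContinuousFunctionalCalculus) (fun x : ℝ => x ^ ρ) T) (lp.single 2 β 1)) (lp.single 2 α 1)‖
        ≤ C' * Real.exp (-(r' * (msz α ^ (1/(2*s)) + msz β ^ (1/(2*s))))) := by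
  have hT : 0 ≤ T := (ContinuousLinearMap.nonneg_iff_isPositive T).2 hpos
  have hnorm : ∀ α : Fin d → ℕ, ‖lp.single (E := fun _ => ℂ) 2 α 1‖ = 1 := fun α => by
    rw [lp.norm_single (by norm_num), norm_one]
  refine ⟨1 + C * ‖T‖ ^ ρ, by have := Real.rpow_nonneg (norm_nonneg T) ρ; positivity,
    r * ρ / (ρ + 1), by positivity, fun α β => ?_⟩
  exact norm_inner_cfc_rpow_le_of_re_inner_le hT hρ.le hC.le _ hnorm _
    (fun α => (RCLike.re_le_norm _).trans (ha α α)) α β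

/-- If `T` is a bounded, self-adjoint, positive semi-definite operator on
`ℓ²(ℕ^d)` whose matrix satisfies `|⟨T e_β, e_α⟩| ≤ C e^{-r(|α|^{1/(2s)} + |β|^{1/(2s)})}`
for some `C, r > 0`, then the power `T^ρ` (`ρ > 0`), defined by the continuous functional
calculus applied to `t ↦ t^ρ`, has a matrix satisfying a bound of the same form:
`|⟨T^ρ e_β, e_α⟩| ≤ C' e^{-r'(|α|^{1/(2s)} + |β|^{1/(2s)})}` for some `C', r' > 0`. -/
theorem stmt16
    (s ρ : ℝ) (hs : 0 < s) (hρ : 0 < ρ) (d : ℕ) (hd : 1 ≤ d)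
    (T : lp (fun _ : (Fin d → ℕ) => ℂ) 2 →L[ℂ] lp (fun _ : (Fin d → ℕ) => ℂ) 2)
    (hsa : IsSelfAdjoint T) (hpos : T.IsPositive)
    (C r : ℝ) (hC : 0 < C) (hr : 0 < r)
    (ha : ∀ α β : Fin d → ℕ,
      ‖inner (𝕜 := ℂ) (T (lp.single 2 β 1)) (lp.single 2 α 1)‖
        ≤ C * Real.exp (-(r * (msz α ^ (1/(2*s)) + msz β ^ (1/(2*s)))))) :
    ∃ C' > (0:ℝ), ∃ r' > (0:ℝ), ∀ α β : Fin d → ℕ,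
      ‖inner (𝕜 := ℂ) ((cfc (instCFC := IsSelfAdjoint.instContinuousFunctionalCalculus) (fun x : ℝ => x ^ ρ) T) (lp.single 2 β 1)) (lp.single 2 α 1)‖
        ≤ C' * Real.exp (-(r' * (msz α ^ (1/(2*s)) + msz β ^ (1/(2*s))))) :=
  stmt16_general s ρ hρ d T hpos C r hC hr ha
end

section
/- Let s > 0, d₁, d₂ ≥ 1 and d = min(d₁, d₂). Suppose a : ℕ^{d₂} × ℕ^{d₁} → ℂ is given by a(α,β) = ∑_{j=1}^∞ λ_j u_j(α) · conj(v_j(β)) (absolutely convergent for each α, β), where λ_j > 0, (u_j)_{j≥1} is a family of nonzero pairwise orthogonal vectors in ℓ²(ℕ^{d₂}), (v_j)_{j≥1} is a family of nonzero pairwise orthogonal vectors in ℓ²(ℕ^{d₁}), and suppose there exist C, r, h > 0 such that for all integers N ≥ 0 and j ≥ 1: λ_j ≤ C e^{−r j^{1/(2ds)}}, (∑_α (2|α| + d₂)^{2N} |u_j(α)|²)^{1/2} ≤ C e^{−r j^{1/(2ds)}} h^N (N!)^{2s}, and (∑_β (2|β| + d₁)^{2N} |v_j(β)|²)^{1/2}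 ≤ C e^{−r j^{1/(2ds)}} h^N (N!)^{2s}. Then there exist C', h' > 0 such that for all integers N₁, N₂ ≥ 0: (∑_{α,β} (2|β| + d₁)^{2N₁} (2|α| + d₂)^{2N₂} |a(α,β)|²)^{1/2} ≤ C' h'^{N₁ + N₂} (N₁! N₂!)^{2s}. -/
/-!
Put `E_j = exp (-r (j+1)^{1/(2ds)})`, summable in `j`. Multiplied by the weight
`(2|β|+d₁)^{N₁} (2|α|+d₂)^{N₂}`, `a` is the pointwise sum over `j` of rank-one terms
`λ_j U_j ⊗ V_j` of `ℓ²` norm `λ_j ‖U_j‖ ‖V_j‖`, and each of these three factors is at most `C E_j`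
times its share of `h^{N₁+N₂} (N₁! N₂!)^{2s}`. As `E_j³ ≤ E_j`, Minkowski's inequality in
`ℓ²(ℕ^{d₂} × ℕ^{d₁})` gives the bound with `C' = C³ ∑_j E_j` and `h' = h`.
-/

open Real
open scoped ENNReal ComplexConjugate Nat

theorem summable_exp_neg_mul_add_one_rpow {r ε : ℝ} (hr : 0 < r) (hε : 0 < ε) :
    Summable fun n : ℕ => exp (-(r * ((n : ℝ) + 1) ^ ε)) := by
  have hlittle := (isLittleO_exp_neg_mul_rpow_atTop hr (-2 / ε)).comp_tendsto
    ((tendsto_rpow_atTop hε).comp tendsto_natCast_atTop_atTop)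
  have hsum : Summable fun n : ℕ => exp (-(r * (n : ℝ) ^ ε)) := by
    refine summable_of_isBigO_nat (Real.summable_nat_rpow.2 (by norm_num : (-2 : ℝ) < -1)) ?_
    refine (hlittle.isBigO.congr_left fun n => by simp [neg_mul]).congr_right fun n => ?_
    simp only [Function.comp_apply]
    rw [← rpow_mul (Nat.cast_nonneg n), mul_div_cancel₀ _ hε.ne']
  exact ((summable_nat_add_iff 1).2 hsum).congr fun n => by push_cast; rfl

theorem lp.hasSum_apply {ι κ : Type*} {E : ι → Type*} [∀ i, NormedAddCommGroup (E i)]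
    {p : ℝ≥0∞} [Fact (1 ≤ p)] {F : κ → lp E p} {G : lp E p} (hF : HasSum F G) (i : ι) :
    HasSum (fun j => F j i) (G i) :=
  hF.map (AddMonoidHom.mk' (fun g : lp E p => g i) fun _ _ => rfl)
    (lp.lipschitzWith_one_eval p i).continuous

section SquareSummable

variable {ι κ E : Type*} [NormedAddCommGroup E]

theorem memℓp_two_iff_summable_sq {f : ι → E} :
    Memℓp f 2 ↔ Summable fun i => ‖f i‖ ^ 2 := by
  rw [memℓp_gen_iff (by norm_num)]
  norm_num

theorem lp.norm_two_eq_sqrt_tsum (f : lp (fun _ : ι => E) 2) : ‖f‖ = √(∑' i, ‖f i‖ ^ 2) := by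
  rw [lp.norm_eq_tsum_rpow (by norm_num), sqrt_eq_rpow]
  norm_num

theorem summable_sq_norm_tsum_and_sqrt_le [CompleteSpace E] {f : κ → ι → E} {B : κ → ℝ}
    (hf : ∀ j, Summable fun i => ‖f j i‖ ^ 2) (hfB : ∀ j, √(∑' i, ‖f j i‖ ^ 2) ≤ B j)
    (hB : Summable B) :
    Summable (fun i => ‖∑' j, f j i‖ ^ 2) ∧ √(∑' i, ‖∑' j, f j i‖ ^ 2) ≤ ∑' j, B j := by
  let F : κ → lp (fun _ : ι => E) 2 := fun j => ⟨f j, memℓp_two_iff_summable_sq.2 (hf j)⟩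
  have hFB : ∀ j, ‖F j‖ ≤ B j := fun j => (lp.norm_two_eq_sqrt_tsum (F j)).trans_le (hfB j)
  have hFnorm : Summable fun j => ‖F j‖ := hB.of_nonneg_of_le (fun _ => norm_nonneg _) hFB
  have hG : ∀ i, (∑' j, F j) i = ∑' j, f j i := fun i =>
    (lp.hasSum_apply hFnorm.of_norm.hasSum i).tsum_eq.symm
  refine ⟨?_, ?_⟩
  · simpa only [hG] using memℓp_two_iff_summable_sq.1 (lp.memℓp (∑' j, F j))
  · calc √(∑' i, ‖∑' j, f j i‖ ^ 2) = ‖∑' j, F j‖ := by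
          simp only [lp.norm_two_eq_sqrt_tsum, hG]
      _ ≤ ∑' j, ‖F j‖ := norm_tsum_le_tsum_norm hFnorm
      _ ≤ ∑' j, B j := hFnorm.tsum_le_tsum hFB hB

end SquareSummable

section Product

variable {𝕜 ι₁ ι₂ : Type*} [NormedDivisionRing 𝕜] {f : ι₁ → 𝕜} {g : ι₂ → 𝕜}

theorem hasSum_sq_norm_mul_prod (c : 𝕜) (hf : Summable fun i => ‖f i‖ ^ 2)
    (hg : Summable fun k => ‖g k‖ ^ 2) :
    HasSum (fun p : ι₁ × ι₂ => ‖c * (f p.1 * g p.2)‖ ^ 2)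
      (‖c‖ ^ 2 * ((∑' i, ‖f i‖ ^ 2) * ∑' k, ‖g k‖ ^ 2)) := by
  simp only [norm_mul, mul_pow]
  exact (hf.hasSum.mul hg.hasSum
    (hf.mul_of_nonneg hg (fun _ => by positivity) fun _ => by positivity)).mul_left _

theorem sqrt_tsum_sq_norm_mul_prod (c : 𝕜) (hf : Summable fun i => ‖f i‖ ^ 2)
    (hg : Summable fun k => ‖g k‖ ^ 2) :
    √(∑' p : ι₁ × ι₂, ‖c * (f p.1 * g p.2)‖ ^ 2)
      = ‖c‖ * (√(∑' i, ‖f i‖ ^ 2) * √(∑' k, ‖g k‖ ^ 2)) := by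
  rw [(hasSum_sq_norm_mul_prod c hf hg).tsum_eq, sqrt_mul (by positivity), sqrt_mul
    (tsum_nonneg fun _ => by positivity), sqrt_sq (norm_nonneg c)]

theorem sqrt_tsum_sq_norm_mul_prod_le {c : 𝕜} {C e A B : ℝ} (hf : Summable fun i => ‖f i‖ ^ 2)
    (hg : Summable fun k => ‖g k‖ ^ 2) (hC : 0 ≤ C) (he : 0 ≤ e) (he₁ : e ≤ 1) (hA : 0 ≤ A)
    (hB : 0 ≤ B) (hc : ‖c‖ ≤ C * e) (hfA : √(∑' i, ‖f i‖ ^ 2) ≤ C * e * A)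
    (hgB : √(∑' k, ‖g k‖ ^ 2) ≤ C * e * B) :
    √(∑' p : ι₁ × ι₂, ‖c * (f p.1 * g p.2)‖ ^ 2) ≤ C ^ 3 * (A * B) * e := by
  rw [sqrt_tsum_sq_norm_mul_prod c hf hg]
  calc ‖c‖ * (√(∑' i, ‖f i‖ ^ 2) * √(∑' k, ‖g k‖ ^ 2))
      ≤ (C * e) * ((C * e * A) * (C * e * B)) := by gcongr
    _ = C ^ 3 * (A * B) * e ^ 3 := by ring
    _ ≤ C ^ 3 * (A * B) * e := by gcongr; exact pow_le_of_le_one he he₁ (by norm_num)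

end Product

theorem summable_and_sqrt_tsum_le_of_eq_tsum_rank_one {ι₁ ι₂ : Type*} {a : ι₁ → ι₂ → ℂ}
    {lam : ℕ → ℝ} {u : ℕ → ι₁ → ℂ} {v : ℕ → ι₂ → ℂ} {w₁ : ι₁ → ℝ} {w₂ : ι₂ → ℝ}
    {E : ℕ → ℝ} {C A B : ℝ} (ha : ∀ α β, a α β = ∑' j, (lam j : ℂ) * u j α * conj (v j β))
    (hE : Summable E) (hE₀ : ∀ j, 0 ≤ E j) (hE₁ : ∀ j, E j ≤ 1) (hC : 0 ≤ C) (hA : 0 ≤ A)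
    (hB : 0 ≤ B) (hlam₀ : ∀ j, 0 ≤ lam j) (hlam : ∀ j, lam j ≤ C * E j)
    (hu : ∀ j, Summable (fun α => w₁ α ^ 2 * ‖u j α‖ ^ 2) ∧
      √(∑' α, w₁ α ^ 2 * ‖u j α‖ ^ 2) ≤ C * E j * A)
    (hv : ∀ j, Summable (fun β => w₂ β ^ 2 * ‖v j β‖ ^ 2) ∧
      √(∑' β, w₂ β ^ 2 * ‖v j β‖ ^ 2) ≤ C * E j * B) :
    Summable (fun p : ι₁ × ι₂ => w₂ p.2 ^ 2 * w₁ p.1 ^ 2 * ‖a p.1 p.2‖ ^ 2) ∧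
      √(∑' p : ι₁ × ι₂, w₂ p.2 ^ 2 * w₁ p.1 ^ 2 * ‖a p.1 p.2‖ ^ 2)
        ≤ C ^ 3 * (A * B) * ∑' j, E j := by
  have hnorm : ∀ (x : ℝ) (z : ℂ), ‖(x : ℂ) * z‖ ^ 2 = x ^ 2 * ‖z‖ ^ 2 := fun x z => by
    rw [norm_mul, mul_pow, Complex.norm_real, norm_eq_abs, sq_abs]
  let U : ℕ → ι₁ → ℂ := fun j α => w₁ α * u j α
  let V : ℕ → ι₂ → ℂ := fun j β => w₂ β * conj (v j β)
  have hU : ∀ j, Summable (fun α => ‖U j α‖ ^ 2) ∧ √(∑' α, ‖U j α‖ ^ 2) ≤ C * E j * A := by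
    simpa only [U, hnorm] using hu
  have hV : ∀ j, Summable (fun β => ‖V j β‖ ^ 2) ∧ √(∑' β, ‖V j β‖ ^ 2) ≤ C * E j * B := by
    simpa only [V, hnorm, RCLike.norm_conj] using hv
  have hlam_norm : ∀ j, ‖(lam j : ℂ)‖ ≤ C * E j := fun j => by
    rw [Complex.norm_real, norm_eq_abs, abs_of_nonneg (hlam₀ j)]
    exact hlam j
  have hsum : ∀ p : ι₁ × ι₂, ‖∑' j, (lam j : ℂ) * (U j p.1 * V j p.2)‖ ^ 2
      = w₂ p.2 ^ 2 * w₁ p.1 ^ 2 * ‖a p.1 p.2‖ ^ 2 := fun p => by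
    have hfactor : ∀ j, (lam j : ℂ) * (U j p.1 * V j p.2)
        = w₁ p.1 * (w₂ p.2 * ((lam j : ℂ) * u j p.1 * conj (v j p.2))) := fun j => by
      simp only [U, V]
      ring
    rw [tsum_congr hfactor, tsum_mul_left, tsum_mul_left, ← ha, hnorm, hnorm]
    ring
  obtain ⟨hsummable, hbound⟩ := summable_sq_norm_tsum_and_sqrt_le
    (fun j => (hasSum_sq_norm_mul_prod _ (hU j).1 (hV j).1).summable)
    (fun j => sqrt_tsum_sq_norm_mul_prod_le (hU j).1 (hV j).1 hC (hE₀ j) (hE₁ j) hA hB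
      (hlam_norm j) (hU j).2 (hV j).2) (hE.mul_left _)
  simp only [hsum] at hsummable hbound
  exact ⟨hsummable, hbound.trans_eq tsum_mul_left⟩

theorem stmt18_general
    (s : ℝ) (hs : 0 < s) (d₁ d₂ : ℕ) (hd₁ : 1 ≤ d₁) (hd₂ : 1 ≤ d₂)
    (a : (Fin d₂ → ℕ) → (Fin d₁ → ℕ) → ℂ)
    (lam : ℕ → ℝ) (u : ℕ → lp (fun _ : (Fin d₂ → ℕ) => ℂ) 2)
    (v : ℕ → lp (fun _ : (Fin d₁ → ℕ) => ℂ) 2)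
    (C r h : ℝ) (hC : 0 < C) (hr : 0 < r) (hh : 0 < h)
    (hlampos : ∀ j, 0 < lam j)
    (hconv : ∀ (α : Fin d₂ → ℕ) (β : Fin d₁ → ℕ),
      Summable (fun j : ℕ => lam j * ‖u j α‖ * ‖v j β‖) ∧
      a α β = ∑' j : ℕ, (lam j : ℂ) * u j α * (starRingEnd ℂ) (v j β))
    (hlam : ∀ j : ℕ, lam j ≤
      C * Real.exp (-(r * ((j : ℝ) + 1) ^ (1/(2*(min d₁ d₂ : ℝ)*s)))))
    (hu : ∀ (N j : ℕ),
      Summable (fun α : Fin d₂ → ℕ => (2 * msz α + d₂) ^ (2*N) * ‖u j α‖^2) ∧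
      Real.sqrt (∑' α : Fin d₂ → ℕ, (2 * msz α + d₂) ^ (2*N) * ‖u j α‖^2)
        ≤ C * Real.exp (-(r * ((j : ℝ) + 1) ^ (1/(2*(min d₁ d₂ : ℝ)*s))))
            * h ^ N * (Nat.factorial N : ℝ) ^ (2*s))
    (hv : ∀ (N j : ℕ),
      Summable (fun β : Fin d₁ → ℕ => (2 * msz β + d₁) ^ (2*N) * ‖v j β‖^2) ∧
      Real.sqrt (∑' β : Fin d₁ → ℕ, (2 * msz β + d₁) ^ (2*N) * ‖v j β‖^2)
        ≤ C * Real.exp (-(r * ((j : ℝ) + 1) ^ (1/(2*(min d₁ d₂ : ℝ)*s))))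
            * h ^ N * (Nat.factorial N : ℝ) ^ (2*s)) :
    ∃ C' > (0:ℝ), ∃ h' > (0:ℝ), ∀ N₁ N₂ : ℕ,
      Summable (fun p : (Fin d₂ → ℕ) × (Fin d₁ → ℕ) =>
        (2 * msz p.2 + d₁) ^ (2*N₁) * (2 * msz p.1 + d₂) ^ (2*N₂) * ‖a p.1 p.2‖^2) ∧
      Real.sqrt (∑' p : (Fin d₂ → ℕ) × (Fin d₁ → ℕ),
          (2 * msz p.2 + d₁) ^ (2*N₁) * (2 * msz p.1 + d₂) ^ (2*N₂) * ‖a p.1 p.2‖^2)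
        ≤ C' * h' ^ (N₁ + N₂) *
            ((Nat.factorial N₁ : ℝ) * (Nat.factorial N₂ : ℝ)) ^ (2*s) := by
  have hε : 0 < 1 / (2 * (min d₁ d₂ : ℝ) * s) := by
    have : (0 : ℝ) < min (d₁ : ℝ) d₂ := lt_min (by exact_mod_cast hd₁) (by exact_mod_cast hd₂)
    positivity
  set E : ℕ → ℝ := fun j => exp (-(r * ((j : ℝ) + 1) ^ (1 / (2 * (min d₁ d₂ : ℝ) * s))))
  have hEsum : Summable E := summable_exp_neg_mul_add_one_rpow hr hε
  have hE₀ : ∀ j, 0 < E j := fun j => exp_pos _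
  have hE₁ : ∀ j, E j ≤ 1 := fun j => exp_le_one_iff.2 (neg_nonpos.2 (by positivity))
  refine ⟨C ^ 3 * ∑' j, E j, by have := hEsum.tsum_pos (fun j => (hE₀ j).le) 0 (hE₀ 0); positivity,
    h, hh, fun N₁ N₂ => ?_⟩
  have key := summable_and_sqrt_tsum_le_of_eq_tsum_rank_one (fun α β => (hconv α β).2) hEsum
    (fun j => (hE₀ j).le) hE₁ hC.le (by positivity) (by positivity) (fun j => (hlampos j).le) hlam
    (w₁ := fun α => (2 * msz α + d₂) ^ N₂) (w₂ := fun β => (2 * msz β + d₁) ^ N₁)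
    (A := h ^ N₂ * (N₂ ! : ℝ) ^ (2 * s)) (B := h ^ N₁ * (N₁ ! : ℝ) ^ (2 * s))
    (fun j => by simpa only [← pow_mul', mul_assoc (C * _)] using hu N₂ j)
    (fun j => by simpa only [← pow_mul', mul_assoc (C * _)] using hv N₁ j)
  simp only [← pow_mul'] at key
  refine ⟨key.1, key.2.trans_eq ?_⟩
  rw [mul_rpow (by positivity) (by positivity)]
  ring

/-- Conversely, if `a(α,β) = ∑_j λ_j u_j(α) conj(v_j β)` (absolutely
convergent) with `λ_j > 0`, nonzero pairwise orthogonal families `(u_j)` in `ℓ²(ℕ^{d₂})`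
and `(v_j)` in `ℓ²(ℕ^{d₁})`, satisfying, with `d = min(d₁,d₂)`,
`λ_j ≤ C e^{-r j^{1/(2ds)}}` and the weighted `ℓ²`-bounds
`(∑_α (2|α|+d₂)^{2N} |u_j(α)|²)^{1/2} ≤ C e^{-r j^{1/(2ds)}} h^N (N!)^{2s}` (and likewise
for `v_j` with `d₁`), then there are `C', h' > 0` such that for all `N₁, N₂ ≥ 0`,
`(∑_{α,β} (2|β|+d₁)^{2N₁} (2|α|+d₂)^{2N₂} |a(α,β)|²)^{1/2} ≤ C' h'^{N₁+N₂} (N₁!N₂!)^{2s}`.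
(Indices `j ≥ 1` are encoded as `j+1`, `j : ℕ`.) -/
theorem stmt18
    (s : ℝ) (hs : 0 < s) (d₁ d₂ : ℕ) (hd₁ : 1 ≤ d₁) (hd₂ : 1 ≤ d₂)
    (a : (Fin d₂ → ℕ) → (Fin d₁ → ℕ) → ℂ)
    (lam : ℕ → ℝ) (u : ℕ → lp (fun _ : (Fin d₂ → ℕ) => ℂ) 2)
    (v : ℕ → lp (fun _ : (Fin d₁ → ℕ) => ℂ) 2)
    (C r h : ℝ) (hC : 0 < C) (hr : 0 < r) (hh : 0 < h)
    (hlampos : ∀ j, 0 < lam j) (hune : ∀ j, u j ≠ 0) (hvne : ∀ j, v j ≠ 0)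
    (huorth : ∀ i j, i ≠ j → inner (𝕜 := ℂ) (u i) (u j) = (0:ℂ))
    (hvorth : ∀ i j, i ≠ j → inner (𝕜 := ℂ) (v i) (v j) = (0:ℂ))
    (hconv : ∀ (α : Fin d₂ → ℕ) (β : Fin d₁ → ℕ),
      Summable (fun j : ℕ => lam j * ‖u j α‖ * ‖v j β‖) ∧
      a α β = ∑' j : ℕ, (lam j : ℂ) * u j α * (starRingEnd ℂ) (v j β))
    (hlam : ∀ j : ℕ, lam j ≤
      C * Real.exp (-(r * ((j : ℝ) + 1) ^ (1/(2*(min d₁ d₂ : ℝ)*s)))))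
    (hu : ∀ (N j : ℕ),
      Summable (fun α : Fin d₂ → ℕ => (2 * msz α + d₂) ^ (2*N) * ‖u j α‖^2) ∧
      Real.sqrt (∑' α : Fin d₂ → ℕ, (2 * msz α + d₂) ^ (2*N) * ‖u j α‖^2)
        ≤ C * Real.exp (-(r * ((j : ℝ) + 1) ^ (1/(2*(min d₁ d₂ : ℝ)*s))))
            * h ^ N * (Nat.factorial N : ℝ) ^ (2*s))
    (hv : ∀ (N j : ℕ),
      Summable (fun β : Fin d₁ → ℕ => (2 * msz β + d₁) ^ (2*N) * ‖v j β‖^2) ∧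
      Real.sqrt (∑' β : Fin d₁ → ℕ, (2 * msz β + d₁) ^ (2*N) * ‖v j β‖^2)
        ≤ C * Real.exp (-(r * ((j : ℝ) + 1) ^ (1/(2*(min d₁ d₂ : ℝ)*s))))
            * h ^ N * (Nat.factorial N : ℝ) ^ (2*s)) :
    ∃ C' > (0:ℝ), ∃ h' > (0:ℝ), ∀ N₁ N₂ : ℕ,
      Summable (fun p : (Fin d₂ → ℕ) × (Fin d₁ → ℕ) =>
        (2 * msz p.2 + d₁) ^ (2*N₁) * (2 * msz p.1 + d₂) ^ (2*N₂) * ‖a p.1 p.2‖^2) ∧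
      Real.sqrt (∑' p : (Fin d₂ → ℕ) × (Fin d₁ → ℕ),
          (2 * msz p.2 + d₁) ^ (2*N₁) * (2 * msz p.1 + d₂) ^ (2*N₂) * ‖a p.1 p.2‖^2)
        ≤ C' * h' ^ (N₁ + N₂) *
            ((Nat.factorial N₁ : ℝ) * (Nat.factorial N₂ : ℝ)) ^ (2*s) :=
  stmt18_general s hs d₁ d₂ hd₁ hd₂ a lam u v C r h hC hr hh hlampos hconv hlam hu hv
end
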